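/- arXiv:hep-th/9208010 — 3 statements merged into one kernel-verified Lean document; each statement's English description precedes it below -/
import Mathlib

section
/- If Λ ∈ A is a right integral (Λ a = ε(a) Λ for all a ∈ A) with ε(Λ) ≠ 0, and θ̃ = −(1/ε(Λ)) ω_U(Λ) ∈ A ⊗ A, then for every a ∈ A: D(a) = θ̃·a − a·θ̃, i.e. a ⊗ 1 − 1 ⊗ a = (θ̃)(1 ⊗ a acting on the right) minus (a ⊗ 1 acting on the left), using the bimodule structure c·(b ⊗ b') = cb ⊗ b' and (b ⊗ b')·c = b ⊗ b'c. -/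
open TensorProduct HopfAlgebra Coalgebra LinearMap

variable {k : Type*} [Field k] {A : Type*} [Ring A] [HopfAlgebra k A]

/-- The universal differential `D a = a ⊗ 1 - 1 ⊗ a` as a linear map. -/
noncomputable def Dlin (k A : Type*) [Field k] [Ring A] [HopfAlgebra k A] :
    A →ₗ[k] A ⊗[k] A :=
  (TensorProduct.mk k A A).flip 1 - TensorProduct.mk k A A 1

/-- Quantum Maurer-Cartan form `ω_U(a) = ε(a) 1⊗1 - Σ S(a₁) ⊗ a₂`. -/
noncomputable def omegaU (k A : Type*) [Field k] [Ring A] [HopfAlgebra k A] :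
    A →ₗ[k] A ⊗[k] A :=
  (Coalgebra.counit (R := k) (A := A)).smulRight ((1 : A) ⊗ₜ[k] (1 : A)) -
    (TensorProduct.map (antipode (R := k)) LinearMap.id) ∘ₗ Coalgebra.comul

/-- Left coaction on the universal calculus: `b ⊗ c ↦ Σ b₁c₁ ⊗ (b₂ ⊗ c₂)`. -/
noncomputable def deltaLU (k A : Type*) [Field k] [Ring A] [HopfAlgebra k A] :
    A ⊗[k] A →ₗ[k] A ⊗[k] (A ⊗[k] A) :=
  (TensorProduct.map (LinearMap.mul' k A) LinearMap.id) ∘ₗ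
    (TensorProduct.tensorTensorTensorComm k A A A A).toLinearMap ∘ₗ
    (TensorProduct.map Coalgebra.comul Coalgebra.comul)

/-- Right coaction on the universal calculus: `b ⊗ c ↦ Σ (b₁ ⊗ c₁) ⊗ b₂c₂`. -/
noncomputable def deltaRU (k A : Type*) [Field k] [Ring A] [HopfAlgebra k A] :
    A ⊗[k] A →ₗ[k] (A ⊗[k] A) ⊗[k] A :=
  (TensorProduct.map LinearMap.id (LinearMap.mul' k A)) ∘ₗ
    (TensorProduct.tensorTensorTensorComm k A A A A).toLinearMap ∘ₗ
    (TensorProduct.map Coalgebra.comul Coalgebra.comul)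

/-- The right adjoint coaction `Ad_R(a) = Σ a₂ ⊗ S(a₁)a₃`. -/
noncomputable def AdR (k A : Type*) [Field k] [Ring A] [HopfAlgebra k A] :
    A →ₗ[k] A ⊗[k] A :=
  (TensorProduct.map LinearMap.id (LinearMap.mul' k A)) ∘ₗ
    (TensorProduct.leftComm k A A A).toLinearMap ∘ₗ
    (TensorProduct.map (antipode (R := k)) LinearMap.id) ∘ₗ
    (TensorProduct.map LinearMap.id Coalgebra.comul) ∘ₗ Coalgebra.comul

/-! With `θ = Σ S(Λ₁) ⊗ Λ₂` we have `ω_U(Λ) = ε(Λ) 1 ⊗ 1 - θ`, so the claim reduces to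
`(a ⊗ 1) θ = θ (1 ⊗ a)`. Since `S` is an antihomomorphism, the integral property
`Δ(Λ y) = ε(y) ΔΛ` reads `Σ (S(y₁) ⊗ 1) θ (1 ⊗ y₂) = ε(y) θ`. Hence, by coassociativity,
`(a ⊗ 1) θ = Σ (a₁ S(a₂) ⊗ 1) θ (1 ⊗ a₃) = θ (1 ⊗ a)`. -/

section Sandwich

variable {R H : Type*} [CommSemiring R] [Semiring H] [Algebra R H]

open Algebra.TensorProduct in
noncomputable def sandwich (t : H ⊗[R] H) : H ⊗[R] H →ₗ[R] H ⊗[R] H :=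
  lift <| (LinearMap.mul R (H ⊗[R] H)).compl₁₂
    (mulRight R t ∘ₗ (includeLeft (S := R)).toLinearMap) includeRight.toLinearMap

@[simp] lemma sandwich_tmul (t : H ⊗[R] H) (x y : H) :
    sandwich t (x ⊗ₜ y) = (x ⊗ₜ 1) * t * (1 ⊗ₜ y) := rfl

end Sandwich

lemma Coalgebra.sum_counit_right_smul {R C : Type*} [CommSemiring R] [AddCommMonoid C]
    [Module R C] [Coalgebra R C] {c : C} {ι : Type*} (r : Repr R c ι) :
    ∑ i ∈ r.index, counit (R := R) (r.right i) • r.left i = c := by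
  simpa only [map_sum, rid_tmul, one_smul] using
    congr(_root_.TensorProduct.rid R C $(sum_tmul_counit_eq r))

section Hopf

variable {R H : Type*} [CommSemiring R] [Semiring H] [HopfAlgebra R H]

lemma sandwich_map_antipode (t u : H ⊗[R] H) :
    sandwich (map (antipode R) id t) (map (antipode R) id u) = map (antipode R) id (t * u) := by
  induction u using TensorProduct.induction_on with
  | zero => simp
  | tmul v w =>
    induction t using TensorProduct.induction_on with
    | zero => simp
    | tmul x y => simp [Algebra.TensorProduct.tmul_mul_tmul, antipode_mul_antidistrib]
    | add t t' ht ht' => simp_all [add_mul, mul_add]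
  | add u u' hu hu' => simp_all [mul_add]

lemma sandwich_map_antipode_comul_of_mul_eq_counit_smul {Λ : H}
    (hΛ : ∀ b : H, Λ * b = counit (R := R) b • Λ) (y : H) :
    sandwich (map (antipode R) id (comul Λ)) (map (antipode R) id (comul y)) =
      counit (R := R) y • map (antipode R) id (comul Λ) := by
  rw [sandwich_map_antipode, ← Bialgebra.comul_mul, hΛ, map_smul, map_smul]

lemma tmul_one_mul_eq_mul_one_tmul {t : H ⊗[R] H}
    (ht : ∀ y : H, sandwich t (map (antipode R) id (comul y)) = counit (R := R) y • t) (a : H) :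
    (a ⊗ₜ[R] 1) * t = t * (1 ⊗ₜ a) := by
  -- `G (u ⊗ v ⊗ w) = (u S(v) ⊗ 1) t (1 ⊗ w)`, evaluated on both bracketings of `Δ² a`
  let G : H ⊗[R] (H ⊗[R] H) →ₗ[R] H ⊗[R] H := sandwich t ∘ₗ
    rTensor H (mul' R H ∘ₗ lTensor H (antipode R)) ∘ₗ (TensorProduct.assoc R H H H).symm.toLinearMap
  have hG_left (x : H) (u : H ⊗[R] H) :
      G (x ⊗ₜ u) = (x ⊗ₜ 1) * sandwich t (map (antipode R) id u) := by
    induction u using TensorProduct.induction_on with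
    | zero => simp
    | tmul v w => simp [G, ← mul_assoc]
    | add u u' hu hu' => simp_all [tmul_add, mul_add]
  have hG_right (z : H ⊗[R] H) (y : H) :
      G (TensorProduct.assoc R H H H (z ⊗ₜ y)) =
        sandwich t (mul' R H (lTensor H (antipode R) z) ⊗ₜ y) := by
    simp [G]
  let r := ℛ R a
  calc (a ⊗ₜ[R] 1) * t
      = ∑ i ∈ r.index, (r.left i ⊗ₜ 1) * (counit (R := R) (r.right i) • t) := by
        conv_lhs => rw [← Coalgebra.sum_counit_right_smul r]
        simp [sum_tmul, Finset.sum_mul, ← smul_tmul']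
    _ = G (lTensor H comul (comul a)) := by
        simp [← r.eq, map_sum, hG_left, ht]
    _ = ∑ i ∈ r.index, counit (R := R) (r.left i) • (t * (1 ⊗ₜ r.right i)) := by
        rw [← coassoc_apply, ← r.eq]
        simp [map_sum, hG_right, Algebra.algebraMap_eq_smul_one, ← smul_tmul',
          ← Algebra.TensorProduct.one_def]
    _ = t * (1 ⊗ₜ a) := by
        conv_rhs => rw [← sum_counit_smul r]
        simp [tmul_sum, Finset.mul_sum]

end Hopf

/-- if `Λ` is a right integral with `ε(Λ) ≠ 0` and
`θ̃ = -(1/ε(Λ)) ω_U(Λ)`, then `Da = θ̃·a − a·θ̃` for all `a`. -/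
theorem D_eq_theta_commutator (Λ : A)
    (hint : ∀ a : A, Λ * a = Coalgebra.counit (R := k) a • Λ)
    (hne : Coalgebra.counit (R := k) Λ ≠ 0) (a : A) :
    Dlin k A a =
      (-(Coalgebra.counit (R := k) Λ)⁻¹ • omegaU k A Λ) * ((1 : A) ⊗ₜ[k] a)
        - (a ⊗ₜ[k] (1 : A)) * (-(Coalgebra.counit (R := k) Λ)⁻¹ • omegaU k A Λ) := by
  set θ := map (antipode k) id (comul (R := k) Λ)
  have hθ : (a ⊗ₜ[k] 1) * θ = θ * (1 ⊗ₜ a) :=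
    tmul_one_mul_eq_mul_one_tmul (sandwich_map_antipode_comul_of_mul_eq_counit_smul hint) a
  have hω : omegaU k A Λ = counit (R := k) Λ • 1 - θ := rfl
  have hθ_tilde : -(counit (R := k) Λ)⁻¹ • omegaU k A Λ = (counit (R := k) Λ)⁻¹ • θ - 1 := by
    rw [hω, smul_sub, smul_smul, neg_mul, inv_mul_cancel₀ hne, neg_smul, one_smul, neg_smul]
    abel
  rw [hθ_tilde]
  simp [Dlin, sub_mul, mul_sub, hθ]
end

section
/- Let α ∈ A be Ad_R-invariant and λ ∈ k, and define n_α(a) = (ε(α) + λ)(a ⊗ 1 − 1 ⊗ a) + Σ S(α₍₁₎) ⊗ α₍₂₎ a − Σ a S(α₍₁₎) ⊗ α₍₂₎. Then Δ_L^U(n_α(a)) = Σ a₍₁₎ ⊗ n_α(a₍₂₎) for all a ∈ A, where Δ_L^U(b ⊗ c) = Σ b₍₁₎ c₍₁₎ ⊗ b₍₂₎ ⊗ c₍₂₎. -/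
open TensorProduct HopfAlgebra Coalgebra LinearMap

variable {k : Type*} [Field k] {A : Type*} [Ring A] [HopfAlgebra k A]

/-- The linear map `n_α(a) = (ε(α)+λ)(a⊗1 − 1⊗a) + Σ S(α₁) ⊗ α₂a − Σ aS(α₁) ⊗ α₂`. -/
noncomputable def nAlpha (k A : Type*) [Field k] [Ring A] [HopfAlgebra k A]
    (α : A) (lam : k) : A →ₗ[k] A ⊗[k] A :=
  (Coalgebra.counit (R := k) α + lam) • Dlin k A +
    (LinearMap.mulLeft k ((TensorProduct.map (antipode (R := k)) LinearMap.id)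
        (Coalgebra.comul α))) ∘ₗ (TensorProduct.mk k A A 1) -
    (LinearMap.mulRight k ((TensorProduct.map (antipode (R := k)) LinearMap.id)
        (Coalgebra.comul α))) ∘ₗ ((TensorProduct.mk k A A).flip 1)

/-!
Write `ω = Σ S(α₁) ⊗ α₂`, so that `n_α(a) = (ε(α) + λ) D(a) + ω (1 ⊗ a) - (a ⊗ 1) ω`.
Since `Δ_L^U(b ⊗ c)` is the product of `b₁ ⊗ b₂ ⊗ 1` and `c₁ ⊗ 1 ⊗ c₂`, the coaction turns right
multiplication by `1 ⊗ a` and left multiplication by `a ⊗ 1` into multiplication by the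
corresponding images of `Δ a`. What remains is the left invariance `Δ_L^U(ω) = 1 ⊗ ω`: in the
convolution algebra of linear maps `A → A ⊗ A ⊗ A` it reduces to
`(Δ ∘ S) * (x ↦ x ⊗ 1) = (x ↦ 1 ⊗ S x)`, which follows from `Δ ∘ S` being the convolution
inverse of `Δ`.
-/

open WithConv

section HopfAlgebra

variable {R H : Type*} [CommSemiring R] [Semiring H] [HopfAlgebra R H]

lemma comul_antipode_convMul_comul :
    toConv (comul ∘ₗ antipode R) * toConv comul = (1 : WithConv (H →ₗ[R] H ⊗[R] H)) := by
  ext x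
  rw [(ℛ R x).convMul_apply]
  simp [← Bialgebra.comul_mul, ← map_sum, sum_antipode_mul_eq_algebraMap_counit]

lemma comul_convMul_tmul_antipode :
    toConv (comul : H →ₗ[R] H ⊗[R] H) * toConv (mk R H H 1 ∘ₗ antipode R) =
      toConv ((mk R H H).flip 1) := by
  ext x
  set r := ℛ R x
  have coassoc := congr(lTensor H (mul' R H ∘ₗ lTensor H (antipode R))
    $(sum_tmul_tmul_eq r (fun i ↦ ℛ R (r.left i)) (fun i ↦ ℛ R (r.right i))))
  have counit_right := congr(TensorProduct.rid R H $(sum_tmul_counit_eq r))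
  simp only [map_sum, lTensor_tmul, comp_apply, mul'_apply, rid_tmul] at coassoc counit_right
  rw [r.convMul_apply]
  simp only [comp_apply, mk_apply, flip_apply, ← (ℛ R _).eq, Finset.sum_mul,
    Algebra.TensorProduct.tmul_mul_tmul, mul_one, coassoc, ← tmul_sum, sum_mul_antipode_eq_smul,
    ← smul_tmul, ← sum_tmul, counit_right, one_smul]

lemma comul_antipode_convMul_tmul_one :
    toConv (comul ∘ₗ antipode R) * toConv ((mk R H H).flip 1) =
      toConv (mk R H H 1 ∘ₗ antipode R) := by
  rw [← comul_convMul_tmul_antipode, ← mul_assoc, comul_antipode_convMul_comul, one_mul]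

end HopfAlgebra

section TensorInclusions

variable (R B : Type*) [CommSemiring R] [Semiring B] [Algebra R B]

noncomputable def incl₁₂ : B ⊗[R] B →ₐ[R] B ⊗[R] (B ⊗[R] B) :=
  Algebra.TensorProduct.map (AlgHom.id R B) Algebra.TensorProduct.includeLeft

noncomputable def incl₁₃ : B ⊗[R] B →ₐ[R] B ⊗[R] (B ⊗[R] B) :=
  Algebra.TensorProduct.map (AlgHom.id R B) Algebra.TensorProduct.includeRight

variable {R B}

@[simp]
lemma incl₁₂_tmul (a b : B) : incl₁₂ R B (a ⊗ₜ b) = a ⊗ₜ (b ⊗ₜ 1) := rfl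

@[simp]
lemma incl₁₃_tmul (a b : B) : incl₁₃ R B (a ⊗ₜ b) = a ⊗ₜ (1 ⊗ₜ b) := rfl

end TensorInclusions

lemma deltaLU_tmul (b c : A) :
    deltaLU k A (b ⊗ₜ c) = incl₁₂ k A (comul b) * incl₁₃ k A (comul c) := by
  simp only [deltaLU, coe_comp, LinearEquiv.coe_coe, Function.comp_apply, map_tmul,
    ← (ℛ k b).eq, ← (ℛ k c).eq, tmul_sum, sum_tmul, map_sum, tensorTensorTensorComm_tmul,
    mul'_apply, id_coe, id_eq, incl₁₂_tmul, incl₁₃_tmul, Finset.sum_mul_sum,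
    Algebra.TensorProduct.tmul_mul_tmul, mul_one, one_mul]
  exact Finset.sum_comm

lemma deltaLU_mul_one_tmul (x : A ⊗[k] A) (a : A) :
    deltaLU k A (x * (1 ⊗ₜ a)) = deltaLU k A x * incl₁₃ k A (comul a) := by
  induction x using TensorProduct.induction_on with
  | zero => simp
  | tmul b c => simp [deltaLU_tmul, mul_assoc]
  | add x y hx hy => simp [add_mul, hx, hy]

lemma deltaLU_tmul_one_mul (a : A) (x : A ⊗[k] A) :
    deltaLU k A ((a ⊗ₜ 1) * x) = incl₁₂ k A (comul a) * deltaLU k A x := by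
  induction x using TensorProduct.induction_on with
  | zero => simp
  | tmul b c => simp [deltaLU_tmul, mul_assoc]
  | add x y hx hy => simp [mul_add, hx, hy]

lemma deltaLU_Dlin (a : A) :
    deltaLU k A (Dlin k A a) = incl₁₂ k A (comul a) - incl₁₃ k A (comul a) := by
  simp [Dlin, deltaLU_tmul]

lemma deltaLU_map_antipode_comul (α : A) :
    deltaLU k A (map (antipode k) id (comul α)) = 1 ⊗ₜ map (antipode k) id (comul α) := by
  have factor : toConv (deltaLU k A ∘ₗ map (antipode k) id ∘ₗ comul) =
      toConv ((incl₁₂ k A).toLinearMap ∘ₗ comul ∘ₗ antipode k) *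
        toConv ((incl₁₃ k A).toLinearMap ∘ₗ comul) := by
    ext x
    simp [(ℛ k x).convMul_apply, ← (ℛ k x).eq, deltaLU_tmul]
  have split : toConv ((incl₁₃ k A).toLinearMap ∘ₗ comul) =
      toConv ((incl₁₂ k A).toLinearMap ∘ₗ (mk k A A).flip 1) *
        toConv ((incl₁₃ k A).toLinearMap ∘ₗ mk k A A 1) := by
    ext x
    simp [(ℛ k x).convMul_apply, ← (ℛ k x).eq]
  have target : toConv (mk k A (A ⊗[k] A) 1 ∘ₗ map (antipode k) id ∘ₗ comul) =
      toConv ((incl₁₂ k A).toLinearMap ∘ₗ mk k A A 1 ∘ₗ antipode k) *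
        toConv ((incl₁₃ k A).toLinearMap ∘ₗ mk k A A 1) := by
    ext x
    simp [(ℛ k x).convMul_apply, ← (ℛ k x).eq]
  have convolution := calc
    toConv (deltaLU k A ∘ₗ map (antipode k) id ∘ₗ comul)
      = toConv ((incl₁₂ k A).toLinearMap ∘ₗ comul ∘ₗ antipode k) *
          toConv ((incl₁₂ k A).toLinearMap ∘ₗ (mk k A A).flip 1) *
          toConv ((incl₁₃ k A).toLinearMap ∘ₗ mk k A A 1) := by rw [factor, split, mul_assoc]
    _ = toConv ((incl₁₂ k A).toLinearMap ∘ₗ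
          (toConv (comul ∘ₗ antipode k) * toConv ((mk k A A).flip 1)).ofConv) *
          toConv ((incl₁₃ k A).toLinearMap ∘ₗ mk k A A 1) := by
      rw [LinearMap.algHom_comp_convMul_distrib]
    _ = toConv ((incl₁₂ k A).toLinearMap ∘ₗ mk k A A 1 ∘ₗ antipode k) *
          toConv ((incl₁₃ k A).toLinearMap ∘ₗ mk k A A 1) := by
      rw [comul_antipode_convMul_tmul_one]
    _ = toConv (mk k A (A ⊗[k] A) 1 ∘ₗ map (antipode k) id ∘ₗ comul) := target.symm
  exact congr($convolution α)

lemma nAlpha_apply (α : A) (lam : k) (a : A) :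
    nAlpha k A α lam a = (counit α + lam) • Dlin k A a +
      map (antipode k) id (comul α) * (1 ⊗ₜ a) - (a ⊗ₜ 1) * map (antipode k) id (comul α) :=
  rfl

lemma map_id_nAlpha_apply (α : A) (lam : k) (u : A ⊗[k] A) :
    map id (nAlpha k A α lam) u = (counit α + lam) • (incl₁₂ k A u - incl₁₃ k A u) +
      (1 ⊗ₜ map (antipode k) id (comul α)) * incl₁₃ k A u -
      incl₁₂ k A u * (1 ⊗ₜ map (antipode k) id (comul α)) := by
  induction u using TensorProduct.induction_on with
  | zero => simp
  | tmul b c => simp [nAlpha_apply, Dlin, tmul_add, tmul_sub, tmul_smul]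
  | add u v hu hv =>
    simp only [map_add, hu, hv, mul_add, add_mul, smul_sub, smul_add]
    abel

theorem nAlpha_left_covariant_general (α : A) (lam : k) (a : A) :
    deltaLU k A (nAlpha k A α lam a) =
      (TensorProduct.map (LinearMap.id : A →ₗ[k] A) (nAlpha k A α lam))
        (Coalgebra.comul (R := k) a) := by
  rw [nAlpha_apply, map_id_nAlpha_apply, map_sub, map_add, map_smul, deltaLU_Dlin,
    deltaLU_mul_one_tmul, deltaLU_tmul_one_mul, deltaLU_map_antipode_comul]

/-- for `Ad_R`-invariant `α`,
`Δ_L^U(n_α(a)) = Σ a₁ ⊗ n_α(a₂)`. -/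
theorem nAlpha_left_covariant (α : A) (lam : k)
    (h : AdR k A α = α ⊗ₜ[k] (1 : A)) (a : A) :
    deltaLU k A (nAlpha k A α lam a) =
      (TensorProduct.map (LinearMap.id : A →ₗ[k] A) (nAlpha k A α lam))
        (Coalgebra.comul (R := k) a) :=
  nAlpha_left_covariant_general α lam a
end

section
/- If α ∈ A is Ad_R-invariant and λ ∈ k, define r_α(a) = (λ + ε(α) − α)(ε(a) − a). Then r_α(a) ∈ ker ε for all a ∈ A, and the right ideal M_α = span{ r_α(a) b : a, b ∈ A } is Ad_R-invariant: Ad_R(M_α) ⊆ M_α ⊗ A, where Ad_R(a) = Σ a₍₂₎ ⊗ S(a₍₁₎) a₍₃₎. -/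
open TensorProduct HopfAlgebra Coalgebra LinearMap

variable {k : Type*} [Field k] {A : Type*} [Ring A] [HopfAlgebra k A]

/-- `r_α(a) = (λ + ε(α) − α)(ε(a) − a)`. -/
noncomputable def rAlpha (k A : Type*) [Field k] [Ring A] [HopfAlgebra k A]
    (α : A) (lam : k) (a : A) : A :=
  ((lam + Coalgebra.counit (R := k) α) • (1 : A) - α) *
    (Coalgebra.counit (R := k) a • (1 : A) - a)

/-- The right ideal `M_α = span { r_α(a) b }`. -/
noncomputable def Malpha (k A : Type*) [Field k] [Ring A] [HopfAlgebra k A]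
    (α : A) (lam : k) : Submodule k A :=
  Submodule.span k {x : A | ∃ a b : A, x = rAlpha k A α lam a * b}

/-!
Writing `Ad_R(a) = Σ (1 ⊗ S a₁) Δ(a₂)` gives `Ad_R(x y) = Σ (1 ⊗ S y₁) Ad_R(x) Δ(y₂)`; in particular
`Ad_R(x y) = (x ⊗ 1) Ad_R(y)` when `x` is `Ad_R`-invariant, as is `β = λ + ε(α) − α`. Together with
`(ε ⊗ id) Ad_R(a) = ε(a) 1 ⊗ 1` this makes `r_α = (β ·) ∘ (ε(·) 1 − id)` a map of `Ad_R`-comodules,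
so `Ad_R(r_α(a)) = (r_α ⊗ id) Ad_R(a) ∈ M_α ⊗ A`. The product formula then carries this over to
the generators `r_α(a) b`, because `M_α ⊗ A` is stable under right multiplication by `A ⊗ A`
(as `M_α` is a right ideal) and under left multiplication by `1 ⊗ A`.
-/

lemma adR_eq_sum {a : A} {ι : Type*} (r : Coalgebra.Repr k a ι) :
    AdR k A a = ∑ i ∈ r.index, ((1 : A) ⊗ₜ antipode k (r.left i)) * comul (r.right i) := by
  have hleft : ∀ (x : A) (t : A ⊗[k] A),
      map id (mul' k A) (TensorProduct.leftComm k A A A (x ⊗ₜ t)) = ((1 : A) ⊗ₜ x) * t := by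
    intro x t
    induction t using TensorProduct.induction_on with
    | zero => simp
    | tmul u v => simp
    | add u v hu hv => simp only [tmul_add, map_add, hu, hv, mul_add]
  simp only [AdR, LinearMap.coe_comp, Function.comp_apply, LinearEquiv.coe_coe, ← r.eq, map_sum,
    map_tmul, id_coe, id_eq, hleft]

lemma adR_mul (x : A) {y : A} {ι : Type*} (r : Coalgebra.Repr k y ι) :
    AdR k A (x * y) =
      ∑ i ∈ r.index, ((1 : A) ⊗ₜ antipode k (r.left i)) * AdR k A x * comul (r.right i) := by
  rw [adR_eq_sum ((ℛ k x).mul r), adR_eq_sum (ℛ k x), Repr.mul_index, Finset.sum_product,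
    Finset.sum_comm]
  refine Finset.sum_congr rfl fun i _ => ?_
  simp only [Repr.mul_left, Repr.mul_right, antipode_mul_antidistrib, Bialgebra.comul_mul,
    Finset.mul_sum, Finset.sum_mul, ← mul_assoc, Algebra.TensorProduct.tmul_mul_tmul, one_mul]

lemma adR_one : AdR k A 1 = 1 := by
  simp [AdR, Algebra.TensorProduct.one_def]

lemma tmul_one_mul_eq_rTensor_mulLeft (x : A) (t : A ⊗[k] A) :
    (x ⊗ₜ[k] (1 : A)) * t = (mulLeft k x).rTensor A t := by
  induction t using TensorProduct.induction_on with
  | zero => simp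
  | tmul u v => simp
  | add u v hu hv => simp only [mul_add, map_add, hu, hv]

lemma adR_mul_of_adR_eq_tmul_one {x : A} (hx : AdR k A x = x ⊗ₜ 1) (y : A) :
    AdR k A (x * y) = (mulLeft k x).rTensor A (AdR k A y) := by
  have hcomm : ∀ s : A, Commute ((1 : A) ⊗ₜ[k] s) (x ⊗ₜ 1) := fun s => by
    simp [Commute, SemiconjBy, Algebra.TensorProduct.tmul_mul_tmul]
  rw [← tmul_one_mul_eq_rTensor_mulLeft, adR_mul x (ℛ k y), adR_eq_sum (ℛ k y), Finset.mul_sum, hx]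
  exact Finset.sum_congr rfl fun i _ => by rw [(hcomm _).eq, mul_assoc]

lemma rTensor_counit_smulRight_adR (a : A) :
    (counit.smulRight (1 : A)).rTensor A (AdR k A a) = counit (R := k) a • 1 := by
  have hcomul : ∀ c : A, (counit.smulRight (1 : A)).rTensor A (comul c) = (1 : A) ⊗ₜ[k] c := by
    intro c
    rw [← (ℛ k c).eq, map_sum]
    conv_rhs => rw [← sum_counit_smul (ℛ k c)]
    simp [tmul_sum, tmul_smul, smul_tmul']
  have hmul : ∀ (s : A) (t : A ⊗[k] A), (counit.smulRight (1 : A)).rTensor A ((1 ⊗ₜ s) * t) =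
      (1 ⊗ₜ s) * (counit.smulRight (1 : A)).rTensor A t := by
    intro s t
    induction t using TensorProduct.induction_on with
    | zero => simp
    | tmul u v => simp
    | add u v hu hv => simp only [mul_add, map_add, hu, hv]
  simp only [adR_eq_sum (ℛ k a), map_sum, hmul, hcomul, Algebra.TensorProduct.tmul_mul_tmul,
    one_mul]
  rw [← tmul_sum, sum_antipode_mul_eq_smul, tmul_smul, Algebra.TensorProduct.one_def]

lemma adR_counit_smul_one_sub (a : A) :
    AdR k A (counit (R := k) a • 1 - a) =
      (counit.smulRight (1 : A) - LinearMap.id).rTensor A (AdR k A a) := by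
  rw [map_sub, map_smul, adR_one, rTensor_sub, LinearMap.sub_apply, rTensor_counit_smulRight_adR]
  simp

section RangeRTensorSubtype

variable {R B : Type*} [CommSemiring R] [Semiring B] [Algebra R B] {M : Submodule R B}

lemma rTensor_mem_range_rTensor_subtype {f : B →ₗ[R] B} (hf : ∀ b, f b ∈ M) (t : B ⊗[R] B) :
    f.rTensor B t ∈ range (M.subtype.rTensor B) := by
  rw [show f = M.subtype ∘ₗ f.codRestrict M hf from rfl, rTensor_comp]
  exact ⟨_, rfl⟩

lemma one_tmul_mul_mul_mem_range_rTensor_subtype (hM : ∀ m ∈ M, ∀ b, m * b ∈ M) (s : B)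
    {t : B ⊗[R] B} (ht : t ∈ range (M.subtype.rTensor B)) (u : B ⊗[R] B) :
    (1 ⊗ₜ s) * t * u ∈ range (M.subtype.rTensor B) := by
  obtain ⟨t, rfl⟩ := ht
  induction t using TensorProduct.induction_on with
  | zero => simp
  | add t t' ht ht' => simpa only [map_add, mul_add, add_mul] using add_mem ht ht'
  | tmul m y =>
    induction u using TensorProduct.induction_on with
    | zero => simp
    | add u u' hu hu' => simpa only [mul_add] using add_mem hu hu'
    | tmul v w =>
      refine ⟨⟨m * v, hM m m.2 v⟩ ⊗ₜ (s * y * w), ?_⟩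
      simp [Algebra.TensorProduct.tmul_mul_tmul]

end RangeRTensorSubtype

section Malpha

variable (α : A) (lam : k)

/-- `rAlpha k A α lam` as a linear map; the two agree by `rfl`. -/
noncomputable def rAlphaLinear : A →ₗ[k] A :=
  mulLeft k ((lam + counit (R := k) α) • (1 : A) - α) ∘ₗ (counit.smulRight (1 : A) - LinearMap.id)

lemma counit_rAlpha (a : A) : counit (R := k) (rAlpha k A α lam a) = 0 := by
  simp [rAlpha]

lemma rAlpha_mem_malpha (a : A) : rAlpha k A α lam a ∈ Malpha k A α lam :=
  Submodule.subset_span ⟨a, 1, (mul_one _).symm⟩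

lemma mul_mem_malpha {m : A} (hm : m ∈ Malpha k A α lam) (c : A) :
    m * c ∈ Malpha k A α lam := by
  induction hm using Submodule.span_induction with
  | mem x hx =>
    obtain ⟨a, b, rfl⟩ := hx
    exact Submodule.subset_span ⟨a, b * c, mul_assoc _ _ _⟩
  | zero => simp
  | add x y _ _ hx hy => simpa only [add_mul] using add_mem hx hy
  | smul r x _ hx => simpa only [smul_mul_assoc] using Submodule.smul_mem _ r hx

variable {α}

lemma adR_rAlpha (h : AdR k A α = α ⊗ₜ[k] (1 : A)) (a : A) :
    AdR k A (rAlpha k A α lam a) = (rAlphaLinear α lam).rTensor A (AdR k A a) := by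
  have hβ : AdR k A ((lam + counit (R := k) α) • (1 : A) - α) =
      ((lam + counit (R := k) α) • (1 : A) - α) ⊗ₜ 1 := by
    rw [map_sub, map_smul, adR_one, h, Algebra.TensorProduct.one_def, sub_tmul, smul_tmul']
  rw [rAlpha, adR_mul_of_adR_eq_tmul_one hβ, adR_counit_smul_one_sub, ← LinearMap.comp_apply,
    ← rTensor_comp]
  rfl

end Malpha

/-- `r_α(a) ∈ ker ε` and `M_α` is `Ad_R`-invariant:
`Ad_R(M_α) ⊆ M_α ⊗ A`. -/
theorem Malpha_AdR_invariant (α : A) (lam : k)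
    (h : AdR k A α = α ⊗ₜ[k] (1 : A)) :
    (∀ a : A, Coalgebra.counit (R := k) (rAlpha k A α lam a) = 0) ∧
    (∀ m ∈ Malpha k A α lam,
      AdR k A m ∈ LinearMap.range
        (TensorProduct.map (Malpha k A α lam).subtype
          (LinearMap.id : A →ₗ[k] A))) := by
  refine ⟨counit_rAlpha α lam, ?_⟩
  suffices Malpha k A α lam ≤ (range ((Malpha k A α lam).subtype.rTensor A)).comap (AdR k A) from
    fun m hm => this hm
  refine Submodule.span_le.mpr ?_
  rintro _ ⟨a, b, rfl⟩
  rw [SetLike.mem_coe, Submodule.mem_comap, adR_mul _ (ℛ k b)]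
  refine Submodule.sum_mem _ fun i _ =>
    one_tmul_mul_mul_mem_range_rTensor_subtype
      (fun _ hm => mul_mem_malpha α lam hm) _ ?_ _
  rw [adR_rAlpha lam h]
  exact rTensor_mem_range_rTensor_subtype (fun c => rAlpha_mem_malpha α lam c) _
end
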